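/- arXiv:2310.04842 — 2 statements merged into one kernel-verified Lean document; each statement's English description precedes it below -/
import Mathlib

section
/- Let X = {x : Tx ≤ α}, and suppose H_c ≥ 0 (entrywise) satisfies H_c T = F + GK and H_c α + Gv + ζ̄ ≤ 1 componentwise, where ζ̄ᵢ = max_{ζ ∈ Z}(Gζ)ᵢ. Then for every x ∈ X and every ζ ∈ Z, (F + GK)x + G(v + ζ) ≤ 1 componentwise. -/
/-- Polyhedral set-inclusion condition for state/input constraint satisfaction. -/
theorem stmt_9 {dα dx du dc : ℕ}
    (T : Matrix (Fin dα) (Fin dx) ℝ) (F : Matrix (Fin dc) (Fin dx) ℝ)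
    (G : Matrix (Fin dc) (Fin du) ℝ) (K : Matrix (Fin du) (Fin dx) ℝ)
    (v : Fin du → ℝ) (α : Fin dα → ℝ)
    (Z : Set (Fin du → ℝ)) (hZ : IsCompact Z) (hZne : Z.Nonempty)
    (Hc : Matrix (Fin dc) (Fin dα) ℝ) (hHc : ∀ i j, 0 ≤ Hc i j)
    (hHcT : Hc * T = F + G * K)
    (ζbar : Fin dc → ℝ)
    (hζbar : ∀ i, IsGreatest ((fun ζ => G.mulVec ζ i) '' Z) (ζbar i))
    (hineq : ∀ i, Hc.mulVec α i + G.mulVec v i + ζbar i ≤ 1) :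
    ∀ x : Fin dx → ℝ, (∀ i, T.mulVec x i ≤ α i) →
      ∀ ζ ∈ Z, ∀ i, (F + G * K).mulVec x i + G.mulVec (v + ζ) i ≤ 1 := by
  intro x hx ζ hζ i
  have h1 : (F + G * K).mulVec x i = Hc.mulVec (T.mulVec x) i := by
    rw [← hHcT, ← Matrix.mulVec_mulVec]
  have h2 : Hc.mulVec (T.mulVec x) i ≤ Hc.mulVec α i := by
    simp only [Matrix.mulVec, dotProduct]
    exact Finset.sum_le_sum fun j _ => mul_le_mul_of_nonneg_left (hx j) (hHc i j)
  have h3 : G.mulVec ζ i ≤ ζbar i := (hζbar i).2 ⟨ζ, hζ, rfl⟩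
  have h4 : G.mulVec (v + ζ) i = G.mulVec v i + G.mulVec ζ i := by
    rw [Matrix.mulVec_add]; rfl
  rw [h1, h4]
  linarith [hineq i]
end

section
/- If H ≥ 0 (entrywise) satisfies Hα + w̄ ≤ α and HT = TΦ, then the set X = {x : Tx ≤ α} is robustly positively invariant for the dynamics x⁺ = Φx + w with w ∈ W, i.e., for all x ∈ X and w ∈ W, Φx + w ∈ X, where w̄ᵢ = max_{w ∈ W}(Tw)ᵢ. -/
/-- Robust positive invariance of the terminal polytopic set. -/
theorem stmt_10 {dα dx : ℕ}
    (T : Matrix (Fin dα) (Fin dx) ℝ) (Φ : Matrix (Fin dx) (Fin dx) ℝ)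
    (α : Fin dα → ℝ) (W : Set (Fin dx → ℝ)) (hW : IsCompact W) (hWne : W.Nonempty)
    (H : Matrix (Fin dα) (Fin dα) ℝ) (hH : ∀ i j, 0 ≤ H i j)
    (hHT : H * T = T * Φ)
    (wbar : Fin dα → ℝ)
    (hwbar : ∀ i, IsGreatest ((fun w => T.mulVec w i) '' W) (wbar i))
    (hineq : ∀ i, H.mulVec α i + wbar i ≤ α i) :
    ∀ x : Fin dx → ℝ, (∀ i, T.mulVec x i ≤ α i) →
      ∀ w ∈ W, ∀ i, T.mulVec (Φ.mulVec x + w) i ≤ α i := by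
  intro x hx w hw i
  have hTw : T.mulVec w i ≤ wbar i := (hwbar i).2 ⟨w, hw, rfl⟩
  have key : T.mulVec (Φ.mulVec x) i = H.mulVec (T.mulVec x) i := by
    rw [Matrix.mulVec_mulVec, Matrix.mulVec_mulVec, hHT]
  have hHmono : H.mulVec (T.mulVec x) i ≤ H.mulVec α i := by
    simp only [Matrix.mulVec, dotProduct]
    exact Finset.sum_le_sum fun j _ => mul_le_mul_of_nonneg_left (hx j) (hH i j)
  have := Matrix.mulVec_add T (Φ.mulVec x) w
  calc T.mulVec (Φ.mulVec x + w) i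
      = T.mulVec (Φ.mulVec x) i + T.mulVec w i := by rw [this]; rfl
    _ ≤ H.mulVec α i + wbar i := by rw [key]; exact add_le_add hHmono hTw
    _ ≤ α i := hineq i
end
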